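/- Assume the system u_{n+1} = A_n u_n has an exponential dichotomy on ℕ with data (K, α_s, α_u, P^{s,u}). Fix k ∈ ℕ and a subspace V ⊆ ℝ^d, let Q_k^s be the orthogonal projection of V onto range(P_k^s) ∩ V, and let ρ ≥ 0 satisfy ‖P_k^s(I−Q_k^s)v‖ ≤ ρ‖P_k^u(I−Q_k^s)v‖ for all v ∈ V. Define P̃_j := P_j^u + P_j^s Φ(j,k) Q_k^s Φ(k,j) for j ≥ k. Then for all v ∈ V and all j ≥ k: ‖(I − P̃_j)Φ(j,k)v‖ ≤ K² (α_s α_u)^{j−k} ρ ‖P̃_j Φ(j,k)v‖. -/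

import Mathlib

open Filter

noncomputable section

abbrev Euc (d : ℕ) := EuclideanSpace ℝ (Fin d)

/-- Angle between the lines spanned by two vectors. -/
noncomputable def vecAngle {d : ℕ} (v w : Euc d) : ℝ :=
  Real.arccos (|(inner ℝ v w : ℝ)| / (‖v‖ * ‖w‖))

/-- Largest principal angle between two subspaces of equal dimension. -/
noncomputable def subAngle {d : ℕ} (V W : Submodule ℝ (Euc d)) : ℝ :=
  Real.arccos (sInf {c : ℝ | ∃ v ∈ V, ‖v‖ = 1 ∧
    c = sSup {r : ℝ | ∃ w ∈ W, ‖w‖ = 1 ∧ r = (inner ℝ v w : ℝ)}})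

/-- Orthogonal projection onto a subspace, as an endomorphism of the ambient space. -/
noncomputable def projCLM {d : ℕ} (V : Submodule ℝ (Euc d)) : Euc d →L[ℝ] Euc d :=
  V.subtypeL ∘L V.orthogonalProjectionOnto

/-- Forward product `A (m+n-1) ⋯ A m`. -/
noncomputable def PhiF {d : ℕ} (A : ℕ → (Euc d →L[ℝ] Euc d)) (m : ℕ) : ℕ → (Euc d →L[ℝ] Euc d)
  | 0 => 1
  | n + 1 => A (m + n) ∘L PhiF A m n

/-- Solution operator `Φ(n,m) = A_{n-1} ⋯ A_m` for `n ≥ m`,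
`Φ(n,m) = A_n⁻¹ ⋯ A_{m-1}⁻¹` for `n < m`. -/
noncomputable def Phi {d : ℕ} (A : ℕ → (Euc d →L[ℝ] Euc d)) (n m : ℕ) : Euc d →L[ℝ] Euc d :=
  if m ≤ n then PhiF A m (n - m) else Ring.inverse (PhiF A n (m - n))

/-- `a_{m,n}(V) = Σ_{j=m}^n ∠(Φ(j-1,0)V, Φ(j,0)V)`. -/
noncomputable def angSum {d : ℕ} (A : ℕ → (Euc d →L[ℝ] Euc d)) (V : Submodule ℝ (Euc d))
    (m n : ℕ) : ℝ :=
  ∑ j ∈ Finset.Icc m n, subAngle (V.map (Phi A (j - 1) 0 : Euc d →ₗ[ℝ] Euc d)) (V.map (Phi A j 0 : Euc d →ₗ[ℝ] Euc d))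

/-! With `w = Φ(j,k)v` and `z = P̃_j w`, two identities in the ring of operators, resting on
`Φ(k,j)Φ(j,k) = I`, the invariance of the projectors and `P_k^s Q = Q`, give
`w - z = Φ(j,k)P_k^s(I-Q)v` and `P_k^u(I-Q)v = Φ(k,j)P_j^u z`. The stable bound applied to the
first, the cone condition on `V`, and the unstable bound applied to the second chain to the
estimate. -/

lemma isUnit_PhiF {d : ℕ} {A : ℕ → (Euc d →L[ℝ] Euc d)} (hA : ∀ n, IsUnit (A n))
    (m n : ℕ) : IsUnit (PhiF A m n) := by
  induction n with
  | zero => exact isUnit_one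
  | succ n ih => exact (hA (m + n)).mul ih

lemma Phi_mul_Phi_of_le {d : ℕ} {A : ℕ → (Euc d →L[ℝ] Euc d)} (hA : ∀ n, IsUnit (A n))
    {k j : ℕ} (h : k ≤ j) : Phi A k j * Phi A j k = 1 := by
  rcases h.eq_or_lt with rfl | h
  · simp only [Phi, le_rfl, if_true, Nat.sub_self]
    exact one_mul 1
  · simp only [Phi, if_neg h.not_ge, if_pos h.le]
    exact Ring.inverse_mul_cancel _ (isUnit_PhiF hA k (j - k))

lemma mul_projCLM_eq_of_le_range {d : ℕ} {P : Euc d →L[ℝ] Euc d} (hP : IsIdempotentElem P)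
    {W : Submodule ℝ (Euc d)} (hW : W ≤ LinearMap.range (P : Euc d →ₗ[ℝ] Euc d)) :
    P * projCLM W = projCLM W := by
  ext1 x
  have hP' := ContinuousLinearMap.IsIdempotentElem.toLinearMap hP
  exact (LinearMap.IsIdempotentElem.mem_range_iff hP').mp (hW (W.orthogonalProjectionOnto x).2)

section DichotomyAlgebra

-- `Φ = Φ(j,k)`, `Ψ = Φ(k,j)`, `P = P_j^s`, `Pk = P_k^s`, so `1 - P + P * (Φ * (Q * Ψ))` is `P̃_j`.
variable {R : Type*} [Ring R] {Φ Ψ P Pk Q : R}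

lemma sub_modifiedProj_mul_eq (hΨΦ : Ψ * Φ = 1) (hPΦ : P * Φ = Φ * Pk) :
    Φ - (1 - P + P * (Φ * (Q * Ψ))) * Φ = Φ * Pk * (1 - Q) := by
  have : P * (Φ * (Q * Ψ)) * Φ = Φ * Pk * Q := by
    rw [mul_assoc, mul_assoc, mul_assoc, hΨΦ, mul_one, ← mul_assoc, hPΦ]
  rw [add_mul, sub_mul, this, hPΦ]
  noncomm_ring

lemma mul_one_sub_mul_modifiedProj_mul_eq (hΨΦ : Ψ * Φ = 1) (hP : IsIdempotentElem P)
    (hΨP : Pk * Ψ = Ψ * P) (hPkQ : Pk * Q = Q) :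
    Ψ * (1 - P) * ((1 - P + P * (Φ * (Q * Ψ))) * Φ) = (1 - Pk) * (1 - Q) := by
  have hPt : (1 - P) * (1 - P + P * (Φ * (Q * Ψ))) = 1 - P := by
    rw [mul_add, hP.one_sub.eq, ← mul_assoc, sub_mul, one_mul, hP.eq, sub_self, zero_mul,
      add_zero]
  have hΨΦk : Ψ * (1 - P) * Φ = 1 - Pk := by
    rw [mul_one_sub, sub_mul, hΨΦ, ← hΨP, mul_assoc, hΨΦ, mul_one]
  have hQk : (1 - Pk) * (1 - Q) = 1 - Pk := by
    rw [mul_one_sub, sub_mul, one_mul, hPkQ, sub_self, sub_zero]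
  rw [hQk, ← hΨΦk, mul_assoc Ψ, mul_assoc Ψ, ← mul_assoc (1 - P), hPt]

end DichotomyAlgebra

lemma norm_mul_apply_le_of_cone {𝕜 E : Type*} [NontriviallyNormedField 𝕜]
    [NormedAddCommGroup E] [NormedSpace 𝕜 E] {Φ Ψ Pk : E →L[𝕜] E} (hPk : IsIdempotentElem Pk)
    {a b ρ : ℝ} (ha : ‖Φ * Pk‖ ≤ a) (hb : ‖Ψ‖ ≤ b) (hρ : 0 ≤ ρ) {x y : E}
    (hx : ‖Pk x‖ ≤ ρ * ‖(1 - Pk) x‖) (hy : (1 - Pk) x = Ψ y) :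
    ‖(Φ * Pk) x‖ ≤ a * b * ρ * ‖y‖ := by
  have ha₀ : 0 ≤ a := (norm_nonneg _).trans ha
  calc ‖(Φ * Pk) x‖ = ‖(Φ * Pk) (Pk x)‖ := by
        rw [← mul_apply_eq_comp (Φ * Pk), mul_assoc, hPk.eq]
    _ ≤ a * (ρ * ‖Ψ y‖) := by
        rw [← hy]
        exact ((Φ * Pk).le_of_opNorm_le ha _).trans (mul_le_mul_of_nonneg_left hx ha₀)
    _ ≤ a * (ρ * (b * ‖y‖)) := by
        gcongr
        exact Ψ.le_of_opNorm_le hb y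
    _ = a * b * ρ * ‖y‖ := by ring

theorem dichotomy_power_estimate_general {d : ℕ} (A : ℕ → (Euc d →L[ℝ] Euc d))
    (hA : ∀ n, IsUnit (A n))
    (K αs αu : ℝ)
    (Ps : ℕ → (Euc d →L[ℝ] Euc d))
    (hproj : ∀ n, Ps n ∘L Ps n = Ps n)
    (hcomm : ∀ n m, Ps n ∘L Phi A n m = Phi A n m ∘L Ps m)
    (hbs : ∀ n m, m ≤ n → ‖Phi A n m ∘L Ps m‖ ≤ K * αs ^ (n - m))
    (hbu : ∀ n m, m ≤ n → ‖Phi A m n ∘L (1 - Ps n)‖ ≤ K * αu ^ (n - m))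
    (k : ℕ) (V : Submodule ℝ (Euc d))
    (Q : Euc d →L[ℝ] Euc d) (hQ : Q = projCLM (LinearMap.range (Ps k : Euc d →ₗ[ℝ] Euc d) ⊓ V))
    (ρ : ℝ) (hρ0 : 0 ≤ ρ)
    (hρ : ∀ v ∈ V, ‖Ps k (v - Q v)‖ ≤ ρ * ‖(1 - Ps k) (v - Q v)‖) :
    ∀ v ∈ V, ∀ j : ℕ, k ≤ j →
      ‖Phi A j k v - ((1 - Ps j) + Ps j ∘L Phi A j k ∘L Q ∘L Phi A k j) (Phi A j k v)‖ ≤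
        K ^ 2 * (αs * αu) ^ (j - k) * ρ *
          ‖((1 - Ps j) + Ps j ∘L Phi A j k ∘L Q ∘L Phi A k j) (Phi A j k v)‖ := by
  intro v hv j hj
  have hΨΦ := Phi_mul_Phi_of_le hA hj
  have hPkQ : Ps k * Q = Q := hQ ▸ mul_projCLM_eq_of_le_range (hproj k) inf_le_left
  set Pt := (1 - Ps j) + Ps j ∘L Phi A j k ∘L Q ∘L Phi A k j
  have hstable : Phi A j k v - Pt (Phi A j k v) = (Phi A j k * Ps k) (v - Q v) :=
    congrArg (· v) (sub_modifiedProj_mul_eq hΨΦ (hcomm j k))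
  have hunstable : (1 - Ps k) (v - Q v) = (Phi A k j * (1 - Ps j)) (Pt (Phi A j k v)) :=
    (congrArg (· v) (mul_one_sub_mul_modifiedProj_mul_eq hΨΦ (hproj j) (hcomm k j) hPkQ)).symm
  rw [hstable]
  calc ‖(Phi A j k * Ps k) (v - Q v)‖
      ≤ K * αs ^ (j - k) * (K * αu ^ (j - k)) * ρ * ‖Pt (Phi A j k v)‖ :=
        norm_mul_apply_le_of_cone (hproj k) (hbs j k hj) (hbu j k hj) hρ0 (hρ v hv) hunstable
    _ = K ^ 2 * (αs * αu) ^ (j - k) * ρ * ‖Pt (Phi A j k v)‖ := by ring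

/-- Under an exponential dichotomy on `ℕ` with data `(K, αs, αu, P^{s,u})`,
for a subspace `V`, the orthogonal projection `Q` of `V` onto `range(P_k^s) ∩ V`, and `ρ ≥ 0`
with `‖P_k^s(I−Q)v‖ ≤ ρ‖P_k^u(I−Q)v‖` on `V`, the operator
`P̃_j = P_j^u + P_j^s Φ(j,k) Q Φ(k,j)` satisfies
`‖(I−P̃_j)Φ(j,k)v‖ ≤ K²(αs αu)^{j−k} ρ ‖P̃_j Φ(j,k)v‖` for `v ∈ V`, `j ≥ k`. -/
theorem dichotomy_power_estimate {d : ℕ} (A : ℕ → (Euc d →L[ℝ] Euc d))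
    (hA : ∀ n, IsUnit (A n))
    (K αs αu : ℝ) (hK : 0 < K) (hαs : αs ∈ Set.Ioo (0 : ℝ) 1) (hαu : αu ∈ Set.Ioo (0 : ℝ) 1)
    (Ps : ℕ → (Euc d →L[ℝ] Euc d))
    (hproj : ∀ n, Ps n ∘L Ps n = Ps n)
    (hcomm : ∀ n m, Ps n ∘L Phi A n m = Phi A n m ∘L Ps m)
    (hbs : ∀ n m, m ≤ n → ‖Phi A n m ∘L Ps m‖ ≤ K * αs ^ (n - m))
    (hbu : ∀ n m, m ≤ n → ‖Phi A m n ∘L (1 - Ps n)‖ ≤ K * αu ^ (n - m))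
    (k : ℕ) (V : Submodule ℝ (Euc d))
    (Q : Euc d →L[ℝ] Euc d) (hQ : Q = projCLM (LinearMap.range (Ps k : Euc d →ₗ[ℝ] Euc d) ⊓ V))
    (ρ : ℝ) (hρ0 : 0 ≤ ρ)
    (hρ : ∀ v ∈ V, ‖Ps k (v - Q v)‖ ≤ ρ * ‖(1 - Ps k) (v - Q v)‖) :
    ∀ v ∈ V, ∀ j : ℕ, k ≤ j →
      ‖Phi A j k v - ((1 - Ps j) + Ps j ∘L Phi A j k ∘L Q ∘L Phi A k j) (Phi A j k v)‖ ≤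
        K ^ 2 * (αs * αu) ^ (j - k) * ρ *
          ‖((1 - Ps j) + Ps j ∘L Phi A j k ∘L Q ∘L Phi A k j) (Phi A j k v)‖ :=
  dichotomy_power_estimate_general A hA K αs αu Ps hproj hcomm hbs hbu k V Q hQ ρ hρ0 hρ
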